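/- An element z of the degree-2 part H² of S_n is primitive and satisfies z² = 0 in S_n if and only if z ∈ {x_1, −x_1} ∪ {2x_j − x_1, −(2x_j − x_1) : 2 ≤ j ≤ n}. Moreover, the image of each of these elements under the reduction map S_n → S_n ⊗ ℤ/2 equals the image of x_1. -/

import Mathlib

/-!
Writing `z = ∑ cᵢ xᵢ`, the square `z²` is detected by ring maps from `S_n` to
`ℤ[u, v]/(u², v²)` sending `xᵢ ↦ gᵢ u + hᵢ v`: such a map exists when `(g, h)` is
compatible with the relations, and it sends `z²` to `2 (c ⬝ g) (c ⬝ h) u v`.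
Two families of such maps give `c_j (c_j + 2 c_1) = 0` and `c_i c_j = 0` for
distinct `i, j ≥ 2`, so `c` is `c_1 e_1` or `c_1 (e_1 - 2 e_j)`, and primitivity
forces `c_1 = ±1`. Each element of the list differs from `x_1` by a multiple of 2.
-/

open MvPolynomial

noncomputable section

open Matrix

/-- The defining relations x_1², x_j² − x_1 x_j (j ≥ 2) of S_n. -/
def srel (n : ℕ) (j : Fin n) : MvPolynomial (Fin n) ℤ :=
  X j ^ 2 -
    (if j.val = 0 then 0
      else X (⟨0, Nat.lt_of_le_of_lt (Nat.zero_le _) j.isLt⟩ : Fin n)) * X j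

/-- S_n = ℤ[x_1,…,x_n]/(x_1², x_j² − x_1 x_j : j = 2,…,n). -/
abbrev SRing (n : ℕ) : Type :=
  MvPolynomial (Fin n) ℤ ⧸ Ideal.span (Set.range (srel n))

/-- The image x_i of X i in S_n. -/
def sx (n : ℕ) (i : Fin n) : SRing n :=
  Ideal.Quotient.mk _ (X i)

/-- The reduction map S_n → S_n ⊗ ℤ/2 = S_n/2S_n. -/
def mod2 (n : ℕ) : SRing n →+* SRing n ⧸ (Ideal.span ({2} : Set (SRing n))) :=
  Ideal.Quotient.mk _

lemma gcd_eq_one_of_isUnit {α ι : Type*} [CommMonoidWithZero α] [NormalizedGCDMonoid α]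
    {s : Finset ι} {c : ι → α} {i : ι} (hi : i ∈ s) (hc : IsUnit (c i)) : s.gcd c = 1 := by
  rw [← Finset.normalize_gcd, normalize_eq_one]
  exact isUnit_of_dvd_unit (Finset.gcd_dvd hi) hc

variable {n : ℕ}

lemma mk_srel (j : Fin n) : (Ideal.Quotient.mk _ (srel n j) : SRing n) = 0 :=
  Ideal.Quotient.eq_zero_iff_mem.2 (Ideal.subset_span ⟨j, rfl⟩)

lemma primitive_of_isUnit {z : SRing n} {c : Fin n → ℤ}
    (hz : z = Fintype.linearCombination ℤ (sx n) c) {i : Fin n} (hi : IsUnit (c i)) :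
    ∃ c' : Fin n → ℤ, Finset.univ.gcd c' = 1 ∧ z = ∑ i, c' i • sx n i :=
  ⟨c, gcd_eq_one_of_isUnit (Finset.mem_univ i) hi, hz.trans (Fintype.linearCombination_apply ..)⟩

lemma mod2_eq_mod2_iff {a b : SRing n} : mod2 n a = mod2 n b ↔ 2 ∣ a - b := by
  rw [mod2, Ideal.Quotient.eq, Ideal.mem_span_singleton]

variable [NeZero n]

lemma srel_zero : srel n 0 = X 0 ^ 2 := by
  simp [srel]

lemma srel_of_ne_zero {j : Fin n} (hj : j ≠ 0) : srel n j = X j ^ 2 - X 0 * X j := by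
  rw [srel, if_neg (Fin.val_ne_zero_iff.2 hj)]
  rfl

lemma sx_zero_sq : sx n 0 ^ 2 = 0 := by
  simpa [srel_zero, sx] using mk_srel (0 : Fin n)

lemma sx_sq {j : Fin n} (hj : j ≠ 0) : sx n j ^ 2 = sx n 0 * sx n j := by
  simpa [srel_of_ne_zero hj, sub_eq_zero, sx] using mk_srel j

lemma two_nsmul_sx_sub_sx_zero_sq {j : Fin n} (hj : j ≠ 0) :
    (2 • sx n j - sx n 0) ^ 2 = 0 := by
  rw [two_nsmul]
  linear_combination 4 * sx_sq hj + sx_zero_sq (n := n)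

def SRing.lift {R : Type*} [CommRing R] (y : Fin n → R) (h0 : y 0 ^ 2 = 0)
    (hy : ∀ j, j ≠ 0 → y j ^ 2 = y 0 * y j) : SRing n →+* R :=
  Ideal.Quotient.lift _ (aeval y).toRingHom fun _ hp ↦ by
    refine Ideal.span_le.2 (Set.range_subset_iff.2 fun j ↦ RingHom.mem_ker.2 ?_) hp
    by_cases hj : j = 0
    · subst hj
      simp [srel_zero, h0]
    · simp [srel_of_ne_zero hj, hy j hj]

@[simp]
lemma SRing.lift_sx {R : Type*} [CommRing R] (y : Fin n → R) (h0 : y 0 ^ 2 = 0)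
    (hy : ∀ j, j ≠ 0 → y j ^ 2 = y 0 * y j) (i : Fin n) :
    SRing.lift y h0 hy (sx n i) = y i := by
  simp [SRing.lift, sx]

lemma zsmul_add_zsmul_mul_zsmul_add_zsmul {R : Type*} [CommRing R] {u v : R}
    (hu : u ^ 2 = 0) (hv : v ^ 2 = 0) (a b c d : ℤ) :
    (a • u + b • v) * (c • u + d • v) = (a * d + b * c) • (u * v) := by
  simp only [zsmul_eq_mul]
  push_cast
  linear_combination (a * c : R) * hu + (b * d : R) * hv

/-- `DualNumber (DualNumber ℤ) = ℤ[u, v]/(u², v²)`, with `u` the inner and `v` the outer `ε`. -/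
def epsU : DualNumber (DualNumber ℤ) := TrivSqZeroExt.inl DualNumber.eps

def epsV : DualNumber (DualNumber ℤ) := DualNumber.eps

lemma epsU_sq : epsU ^ 2 = 0 := by
  ext <;> simp [epsU, sq]

lemma epsV_sq : epsV ^ 2 = 0 := by
  simp [epsV, sq]

lemma eq_zero_of_zsmul_epsU_mul_epsV_eq_zero {k : ℤ} (h : k • (epsU * epsV) = 0) : k = 0 := by
  simpa [epsU, epsV] using congrArg (fun x ↦ x.snd.snd) h

lemma dotProduct_mul_dotProduct_eq_zero_of_sq_eq_zero (g h : Fin n → ℤ)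
    (h0 : g 0 * h 0 = 0) (hgh : ∀ j, j ≠ 0 → 2 * (g j * h j) = g 0 * h j + h 0 * g j)
    {c : Fin n → ℤ} (hc : (∑ i, c i • sx n i) ^ 2 = 0) :
    (c ⬝ᵥ g) * (c ⬝ᵥ h) = 0 := by
  have key := zsmul_add_zsmul_mul_zsmul_add_zsmul epsU_sq epsV_sq
  let φ := SRing.lift (fun i ↦ g i • epsU + h i • epsV)
    (by rw [sq, key, mul_comm (h 0), h0, add_zero, zero_smul])
    (fun j hj ↦ by rw [sq, key, key]; congr 1; linear_combination hgh j hj)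
  have hφ : φ (∑ i, c i • sx n i) = (c ⬝ᵥ g) • epsU + (c ⬝ᵥ h) • epsV := by
    simp only [map_sum, map_zsmul, φ, SRing.lift_sx, smul_add, smul_smul, dotProduct,
      Finset.sum_add_distrib, Finset.sum_smul]
  have := congrArg φ hc
  rw [map_pow, hφ, map_zero, sq, key] at this
  linarith [eq_zero_of_zsmul_epsU_mul_epsV_eq_zero this]

lemma coeff_mul_coeff_add_two_mul_coeff_zero_eq_zero {c : Fin n → ℤ}
    (hc : (∑ i, c i • sx n i) ^ 2 = 0) {j : Fin n} (hj : j ≠ 0) :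
    c j * (c j + 2 * c 0) = 0 := by
  have := dotProduct_mul_dotProduct_eq_zero_of_sq_eq_zero (Pi.single j 1 + 2 • Pi.single 0 1)
    (Pi.single j 1) (by simp [hj]) (fun k hk ↦ by
      by_cases hkj : k = j
      · subst hkj; simp [hj]
      · simp [hkj, hk, hj]) hc
  simp only [dotProduct_add, dotProduct_smul, dotProduct_single_one] at this
  linear_combination this

lemma coeff_mul_coeff_eq_zero {c : Fin n → ℤ} (hc : (∑ i, c i • sx n i) ^ 2 = 0)
    {i j : Fin n} (hi : i ≠ 0) (hj : j ≠ 0) (hij : i ≠ j) : c i * c j = 0 := by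
  have := dotProduct_mul_dotProduct_eq_zero_of_sq_eq_zero (Pi.single i 1) (Pi.single j 1)
    (by simp [hi, hj]) (fun k hk ↦ by
      by_cases hki : k = i
      · subst hki; simp [hij, hk, hj]
      · simp [hki, hi, hj]) hc
  simpa only [dotProduct_single_one] using this

lemma eq_smul_of_sq_eq_zero {c : Fin n → ℤ} (hc : (∑ i, c i • sx n i) ^ 2 = 0) :
    c = c 0 • Pi.single 0 1 ∨ ∃ j, j ≠ 0 ∧ c = c 0 • (Pi.single 0 1 - Pi.single j 2) := by
  by_cases h : ∃ j, j ≠ 0 ∧ c j ≠ 0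
  · obtain ⟨j, hj, hcj⟩ := h
    refine Or.inr ⟨j, hj, funext fun i ↦ ?_⟩
    by_cases hi0 : i = 0
    · subst hi0; simp [Ne.symm hj]
    by_cases hij : i = j
    · subst hij
      have hcj' : c i + 2 * c 0 = 0 :=
        (mul_eq_zero.1 (coeff_mul_coeff_add_two_mul_coeff_zero_eq_zero hc hj)).resolve_left hcj
      simp [hi0]; linarith
    · have hci : c i = 0 :=
        (mul_eq_zero.1 (coeff_mul_coeff_eq_zero hc hi0 hj hij)).resolve_right hcj
      simp [hi0, hij, hci]
  · push Not at h
    refine Or.inl (funext fun i ↦ ?_)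
    by_cases hi0 : i = 0
    · subst hi0; simp
    · simp [hi0, h i hi0]

lemma isUnit_coeff_zero {c : Fin n → ℤ} (hprim : Finset.univ.gcd c = 1) {d : Fin n → ℤ}
    (hd : c = c 0 • d) : IsUnit (c 0) :=
  isUnit_of_dvd_one (hprim ▸ Finset.dvd_gcd fun i _ ↦ ⟨d i, congrFun hd i⟩)

theorem square_zero_primitive_in_Hn (n : ℕ) [NeZero n] :
    (∀ z : SRing n,
      ((∃ c : Fin n → ℤ, Finset.univ.gcd c = 1 ∧ z = ∑ i, c i • sx n i) ∧ z ^ 2 = 0) ↔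
        (z = sx n 0 ∨ z = -sx n 0 ∨
          ∃ j : Fin n, j ≠ 0 ∧ (z = 2 • sx n j - sx n 0 ∨ z = -(2 • sx n j - sx n 0)))) ∧
    (∀ z : SRing n,
      (z = sx n 0 ∨ z = -sx n 0 ∨
          ∃ j : Fin n, j ≠ 0 ∧ (z = 2 • sx n j - sx n 0 ∨ z = -(2 • sx n j - sx n 0))) →
        mod2 n z = mod2 n (sx n 0)) := by
  refine ⟨fun z ↦ ⟨?_, ?_⟩, ?_⟩
  · rintro ⟨⟨c, hprim, rfl⟩, hc⟩
    rw [← Fintype.linearCombination_apply]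
    rcases eq_smul_of_sq_eq_zero hc with hd | ⟨j, hj, hd⟩
    all_goals
      rcases Int.isUnit_iff.1 (isUnit_coeff_zero hprim hd) with h | h
      all_goals rw [hd, h]; simp
    · exact Or.inr (Or.inr ⟨j, hj, Or.inr (by module)⟩)
    · exact Or.inr (Or.inr ⟨j, hj, Or.inl (by module)⟩)
  · rintro (rfl | rfl | ⟨j, hj, rfl | rfl⟩)
    · exact ⟨primitive_of_isUnit (c := Pi.single 0 1) (i := 0) (by simp) (by simp), sx_zero_sq⟩
    · exact ⟨primitive_of_isUnit (c := Pi.single 0 (-1)) (i := 0) (by simp) (by simp),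
        by linear_combination sx_zero_sq (n := n)⟩
    · exact ⟨primitive_of_isUnit (c := Pi.single j 2 - Pi.single 0 1) (i := 0) (by simp)
        (by simp [hj]), two_nsmul_sx_sub_sx_zero_sq hj⟩
    · exact ⟨primitive_of_isUnit (c := Pi.single 0 1 - Pi.single j 2) (i := 0) (by simp)
        (by simp [hj]), by linear_combination two_nsmul_sx_sub_sx_zero_sq hj⟩
  · rintro z (rfl | rfl | ⟨j, -, rfl | rfl⟩) <;> rw [mod2_eq_mod2_iff]
    · simp
    · exact ⟨-sx n 0, by ring⟩
    · exact ⟨sx n j - sx n 0, by rw [two_nsmul]; ring⟩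
    · exact ⟨-sx n j, by rw [two_nsmul]; ring⟩

end
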